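/- arXiv:2605.14658 — 3 statements merged into one kernel-verified Lean document; each statement's English description precedes it below -/
import Mathlib

section
/- The function f(r) = a₀ (r − r₀)^{3/2}, defined for r > r₀ with a₀ ≠ 0, satisfies the ODE f·f⁗ + f'·f''' = 0 on (r₀, ∞). -/
lemma pow_hasDerivAt (C p r₀ : ℝ) {r : ℝ} (hr : r₀ < r) :
    HasDerivAt (fun s : ℝ => C * (s - r₀) ^ p) (C * p * (r - r₀) ^ (p - 1)) r := by
  have h1 : HasDerivAt (fun s : ℝ => s - r₀) 1 r := (hasDerivAt_id r).sub_const r₀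
  have hne : r - r₀ ≠ 0 := (sub_pos.mpr hr).ne'
  have h2 := (Real.hasDerivAt_rpow_const (x := r - r₀) (p := p) (Or.inl hne)).comp r h1
  simpa [mul_assoc, mul_comm, mul_left_comm] using h2.const_mul C

lemma deriv_key (g : ℝ → ℝ) (C p r₀ : ℝ)
    (hg : ∀ s, r₀ < s → g s = C * (s - r₀) ^ p) :
    ∀ r, r₀ < r → deriv g r = C * p * (r - r₀) ^ (p - 1) := by
  intro r hr
  have hev : g =ᶠ[nhds r] fun s : ℝ => C * (s - r₀) ^ p :=
    Filter.eventuallyEq_of_mem (isOpen_Ioi.mem_nhds hr) fun s hs => hg s hs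
  rw [hev.deriv_eq]
  exact (pow_hasDerivAt C p r₀ hr).deriv

/-- The function `f(r) = a₀ (r − r₀)^{3/2}` satisfies `f·f⁗ + f'·f''' = 0` on `(r₀, ∞)`. -/
theorem three_halves_power_solution (a₀ r₀ : ℝ) (ha₀ : a₀ ≠ 0) :
    ∀ r : ℝ, r₀ < r →
      (fun s : ℝ => a₀ * (s - r₀) ^ ((3 : ℝ) / 2)) r
          * iteratedDeriv 4 (fun s : ℝ => a₀ * (s - r₀) ^ ((3 : ℝ) / 2)) r
        + deriv (fun s : ℝ => a₀ * (s - r₀) ^ ((3 : ℝ) / 2)) r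
          * iteratedDeriv 3 (fun s : ℝ => a₀ * (s - r₀) ^ ((3 : ℝ) / 2)) r = 0 := by
  set f : ℝ → ℝ := fun s => a₀ * (s - r₀) ^ ((3 : ℝ) / 2) with hf
  have h1 : ∀ s, r₀ < s → deriv f s = (a₀ * (3 / 2)) * (s - r₀) ^ ((1 : ℝ) / 2) := by
    intro s hs
    have := deriv_key f a₀ (3 / 2) r₀ (fun s _ => rfl) s hs
    norm_num at this ⊢
    linarith [this]
  have h2 : ∀ s, r₀ < s →
      deriv (deriv f) s = (a₀ * (3 / 4)) * (s - r₀) ^ (-(1 : ℝ) / 2) := by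
    intro s hs
    have := deriv_key (deriv f) (a₀ * (3 / 2)) (1 / 2) r₀ h1 s hs
    norm_num at this ⊢
    convert this using 2 <;> ring
  have h3 : ∀ s, r₀ < s →
      deriv (deriv (deriv f)) s = (-(a₀ * (3 / 8))) * (s - r₀) ^ (-(3 : ℝ) / 2) := by
    intro s hs
    have := deriv_key (deriv (deriv f)) (a₀ * (3 / 4)) (-1 / 2) r₀ h2 s hs
    rw [show (-1 : ℝ) / 2 - 1 = -(3 : ℝ) / 2 by norm_num] at this
    rw [this]; ring
  have h4 : ∀ s, r₀ < s →
      deriv (deriv (deriv (deriv f))) s = (a₀ * (9 / 16)) * (s - r₀) ^ (-(5 : ℝ) / 2) := by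
    intro s hs
    have := deriv_key (deriv (deriv (deriv f))) (-(a₀ * (3 / 8))) (-3 / 2) r₀ h3 s hs
    rw [show (-3 : ℝ) / 2 - 1 = -(5 : ℝ) / 2 by norm_num] at this
    rw [this]; ring
  intro r hr
  have hx : (0 : ℝ) < r - r₀ := sub_pos.mpr hr
  have e3 : iteratedDeriv 3 f = deriv (deriv (deriv f)) := by
    simp [iteratedDeriv_succ, iteratedDeriv_zero]
  have e4 : iteratedDeriv 4 f = deriv (deriv (deriv (deriv f))) := by
    simp [iteratedDeriv_succ, iteratedDeriv_zero]
  rw [e3, e4, h1 r hr, h3 r hr, h4 r hr]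
  show a₀ * (r - r₀) ^ ((3 : ℝ) / 2) * _ + _ = 0
  have key1 : (r - r₀) ^ ((3 : ℝ) / 2) * (r - r₀) ^ (-(5 : ℝ) / 2)
      = (r - r₀) ^ (-(1 : ℝ)) := by
    rw [← Real.rpow_add hx]; norm_num
  have key2 : (r - r₀) ^ ((1 : ℝ) / 2) * (r - r₀) ^ (-(3 : ℝ) / 2)
      = (r - r₀) ^ (-(1 : ℝ)) := by
    rw [← Real.rpow_add hx]; norm_num
  calc a₀ * (r - r₀) ^ ((3 : ℝ) / 2) * (a₀ * (9 / 16) * (r - r₀) ^ (-(5 : ℝ) / 2))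
        + a₀ * (3 / 2) * (r - r₀) ^ ((1 : ℝ) / 2)
          * (-(a₀ * (3 / 8)) * (r - r₀) ^ (-(3 : ℝ) / 2))
      = a₀ * a₀ * (9 / 16) * ((r - r₀) ^ ((3 : ℝ) / 2) * (r - r₀) ^ (-(5 : ℝ) / 2))
        - a₀ * a₀ * (9 / 16) * ((r - r₀) ^ ((1 : ℝ) / 2) * (r - r₀) ^ (-(3 : ℝ) / 2)) := by
        ring
    _ = 0 := by rw [key1, key2]; ring
end

section
/- For constants γ, β, Λ, C, D with γ + 12βΛ ≠ 0 and γ ≠ 0, the quadratic polynomial f(r) = −Λ r² + (C/γ) r + (D − 3βC²/γ²)/(γ + 12βΛ) satisfies γ f + γΛ r² − 6β (f f'' − (f')²/2) = C r + D for all r. -/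
/-!
For a quadratic `f = a s² + b s + c` the quadratic part `f f'' − (f')²/2` of the Kundt operator is
the constant `2ac − b²/2`. With `a = −Λ` the `r²` terms then cancel, so the equation reduces to
matching the linear coefficient (`γ b = C`) and the constant term (`(γ + 12βΛ) c + 3βb² = D`),
which the chosen `b` and `c` do.
-/

lemma deriv_quadratic (a b c : ℝ) :
    deriv (fun s : ℝ => a * s ^ 2 + b * s + c) = fun r => 2 * a * r + b := by
  funext r
  have h : HasDerivAt (fun s : ℝ => a * s ^ 2 + b * s + c) (a * (2 * r) + b) r := by
    simpa [add_assoc, Pi.add_def] using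
      ((hasDerivAt_pow 2 r).const_mul a).add (((hasDerivAt_id r).const_mul b).add_const c)
  rw [h.deriv]
  ring

lemma iteratedDeriv_two_quadratic (a b c : ℝ) :
    iteratedDeriv 2 (fun s : ℝ => a * s ^ 2 + b * s + c) = fun _ => 2 * a := by
  rw [iteratedDeriv_succ, iteratedDeriv_one, deriv_quadratic]
  funext r
  simp

lemma quadratic_mul_iteratedDeriv_two_sub_deriv_sq (a b c r : ℝ) :
    (fun s : ℝ => a * s ^ 2 + b * s + c) r * iteratedDeriv 2 (fun s : ℝ => a * s ^ 2 + b * s + c) r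
      - (deriv (fun s : ℝ => a * s ^ 2 + b * s + c) r) ^ 2 / 2 = 2 * a * c - b ^ 2 / 2 := by
  rw [deriv_quadratic, iteratedDeriv_two_quadratic]
  ring

lemma kundt_operator_quadratic (γ β Λ b c r : ℝ) :
    γ * (fun s : ℝ => -Λ * s ^ 2 + b * s + c) r + γ * Λ * r ^ 2
      - 6 * β * ((fun s : ℝ => -Λ * s ^ 2 + b * s + c) r
          * iteratedDeriv 2 (fun s : ℝ => -Λ * s ^ 2 + b * s + c) r
        - (deriv (fun s : ℝ => -Λ * s ^ 2 + b * s + c) r) ^ 2 / 2)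
      = γ * b * r + (γ + 12 * β * Λ) * c + 3 * β * b ^ 2 := by
  rw [quadratic_mul_iteratedDeriv_two_sub_deriv_sq]
  ring

/-- The Nariai quadratic polynomial
`f(r) = −Λ r² + (C/γ) r + (D − 3βC²/γ²)/(γ + 12βΛ)` satisfies the twice-integrated
quadratic-gravity Kundt equation `γ f + γΛ r² − 6β (f f'' − (f')²/2) = C r + D`. -/
theorem nariai_exact_solution (γ β Λ C D : ℝ) (hγ : γ ≠ 0) (h12 : γ + 12 * β * Λ ≠ 0) :
    ∀ r : ℝ,
      γ * (fun s : ℝ => -Λ * s ^ 2 + (C / γ) * s + (D - 3 * β * C ^ 2 / γ ^ 2) / (γ + 12 * β * Λ)) r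
        + γ * Λ * r ^ 2
        - 6 * β * ((fun s : ℝ => -Λ * s ^ 2 + (C / γ) * s + (D - 3 * β * C ^ 2 / γ ^ 2) / (γ + 12 * β * Λ)) r
            * iteratedDeriv 2 (fun s : ℝ => -Λ * s ^ 2 + (C / γ) * s + (D - 3 * β * C ^ 2 / γ ^ 2) / (γ + 12 * β * Λ)) r
          - (deriv (fun s : ℝ => -Λ * s ^ 2 + (C / γ) * s + (D - 3 * β * C ^ 2 / γ ^ 2) / (γ + 12 * β * Λ)) r) ^ 2 / 2)
      = C * r + D := by
  intro r
  rw [kundt_operator_quadratic, mul_div_cancel₀ _ h12]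
  field_simp
  ring
end

section
/- The function h(θ) = −(1/2)(3cos²θ − 1)·log(cot(θ/2)) + (3/2)cosθ satisfies (Δ + 6)h = 0 on the 2-sphere minus the poles {θ = 0, π}, where Δh = (1/sinθ)∂_θ(sinθ ∂_θ h). -/
/-!
Under the substitution `x = cos θ` the axisymmetric Laplacian becomes the Legendre operator
`y ↦ ((1 - x²) y')'`, and `log (cot (θ/2)) = artanh (cos θ)`. Hence `h = -Q₂ ∘ cos`, where
`Q₂(x) = P₂(x) artanh x - 3x/2` is the Legendre function of the second kind of degree `2`, and
`(Δ + 6) h = 0` is Legendre's equation `((1 - x²) Q₂')' + 2·3 Q₂ = 0` on `(-1, 1)`.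
-/

open Real Set

theorem Real.hasDerivAt_artanh {x : ℝ} (hx : x ∈ Ioo (-1) 1) :
    HasDerivAt artanh (1 / (1 - x ^ 2)) x := by
  obtain ⟨hx₁, hx₂⟩ := hx
  have hq : HasDerivAt (fun x => (1 + x) / (1 - x))
      ((1 * (1 - x) - (1 + x) * -1) / (1 - x) ^ 2) x :=
    ((hasDerivAt_id x).const_add 1).div ((hasDerivAt_id x).const_sub 1) (by linarith)
  have hlog := (hq.log (div_pos (by linarith) (by linarith)).ne').const_mul (1 / 2)
  refine (hlog.congr_deriv ?_).congr_of_eventuallyEq ?_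
  · have : 1 + x ≠ 0 := by linarith
    have : 1 - x ≠ 0 := by linarith
    have : 1 - x ^ 2 ≠ 0 := by nlinarith
    field_simp
    ring
  · filter_upwards [Ioo_mem_nhds hx₁ hx₂] with y hy
      using artanh_eq_half_log (Ioo_subset_Icc_self hy)

theorem Real.cos_mem_Ioo_neg_one_one {θ : ℝ} (hθ : θ ∈ Ioo 0 π) : cos θ ∈ Ioo (-1) 1 := by
  have hsin := sin_pos_of_pos_of_lt_pi hθ.1 hθ.2
  have hcos : cos θ ^ 2 < 1 := by nlinarith [sin_sq_add_cos_sq θ]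
  exact ⟨by nlinarith, by nlinarith⟩

theorem Real.artanh_cos_eq_log_cot_half {θ : ℝ} (hθ : θ ∈ Ioo 0 π) :
    artanh (cos θ) = log (cos (θ / 2) / sin (θ / 2)) := by
  have hs : 0 < sin (θ / 2) :=
    sin_pos_of_pos_of_lt_pi (by linarith [hθ.1]) (by linarith [hθ.2, pi_pos])
  have hc : 0 < cos (θ / 2) := cos_pos_of_mem_Ioo ⟨by linarith [hθ.1, pi_pos], by linarith [hθ.2]⟩
  have hcos : cos θ = 2 * cos (θ / 2) ^ 2 - 1 := by
    rw [← cos_two_mul]; ring_nf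
  have hratio : (1 + cos θ) / (1 - cos θ) = (cos (θ / 2) / sin (θ / 2)) ^ 2 := by
    have hsub : 1 - cos θ ≠ 0 := (sub_pos.2 (cos_mem_Ioo_neg_one_one hθ).2).ne'
    rw [div_pow, div_eq_div_iff hsub (by positivity), hcos]
    linear_combination (2 * cos (θ / 2) ^ 2) * sin_sq_add_cos_sq (θ / 2)
  rw [artanh, hratio, sqrt_sq (by positivity)]

noncomputable def legendreQ₂ (x : ℝ) : ℝ := 1 / 2 * (3 * x ^ 2 - 1) * artanh x - 3 / 2 * x

/-- `(1 - x²) Q₂'(x)`. -/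
noncomputable def legendreQ₂Flux (x : ℝ) : ℝ := 3 * x * (1 - x ^ 2) * artanh x + 3 * x ^ 2 - 2

theorem hasDerivAt_legendreQ₂ {x : ℝ} (hx : x ∈ Ioo (-1) 1) :
    HasDerivAt legendreQ₂ (legendreQ₂Flux x / (1 - x ^ 2)) x := by
  have hx2 : 1 - x ^ 2 ≠ 0 := by nlinarith [hx.1, hx.2]
  have := ((((hasDerivAt_pow 2 x).const_mul 3).sub_const 1).const_mul (1 / 2)).mul
    (hasDerivAt_artanh hx) |>.sub ((hasDerivAt_id x).const_mul (3 / 2))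
  refine this.congr_deriv ?_
  rw [legendreQ₂Flux]
  field_simp
  ring

theorem hasDerivAt_legendreQ₂Flux {x : ℝ} (hx : x ∈ Ioo (-1) 1) :
    HasDerivAt legendreQ₂Flux (-6 * legendreQ₂ x) x := by
  have hx2 : 1 - x ^ 2 ≠ 0 := by nlinarith [hx.1, hx.2]
  have := ((((hasDerivAt_id' x).const_mul 3).fun_mul ((hasDerivAt_pow 2 x).const_sub 1)).fun_mul
    (hasDerivAt_artanh hx)).fun_add ((hasDerivAt_pow 2 x).const_mul 3) |>.sub_const 2
  refine this.congr_deriv ?_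
  rw [legendreQ₂]
  field_simp
  ring

noncomputable def axisymLaplacian (h : ℝ → ℝ) (θ : ℝ) : ℝ :=
  1 / sin θ * deriv (fun t => sin t * deriv h t) θ

theorem axisymLaplacian_eq_of_eqOn_comp_cos {h y F : ℝ → ℝ} {U : Set ℝ} {θ F' : ℝ}
    (hU : IsOpen U) (hθ : θ ∈ U) (hsin : ∀ t ∈ U, sin t ≠ 0) (hh : EqOn h (y ∘ cos) U)
    (hy : ∀ t ∈ U, HasDerivAt y (F (cos t) / (1 - cos t ^ 2)) (cos t))
    (hF : HasDerivAt F F' (cos θ)) :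
    axisymLaplacian h θ = F' := by
  have hflux : EqOn (fun t => sin t * deriv h t) (fun t => -F (cos t)) U := by
    intro t ht
    have hderiv : HasDerivAt h (F (cos t) / (1 - cos t ^ 2) * -sin t) t :=
      ((hy t ht).comp t (hasDerivAt_cos t)).congr_of_eventuallyEq
        (hh.eventuallyEq_of_mem (hU.mem_nhds ht))
    have hsin_sq : 1 - cos t ^ 2 = sin t ^ 2 := by rw [← sin_sq_add_cos_sq t]; ring
    dsimp only
    rw [hderiv.deriv, hsin_sq]
    field_simp [hsin t ht]
  have hdiff : HasDerivAt (fun t => -F (cos t)) (-(F' * -sin θ)) θ :=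
    (hF.comp θ (hasDerivAt_cos θ)).neg
  rw [axisymLaplacian,
    (hdiff.congr_of_eventuallyEq (hflux.eventuallyEq_of_mem (hU.mem_nhds hθ))).deriv]
  field_simp [hsin θ hθ]

/-- The singular axially symmetric function
`h(θ) = −(1/2)(3cos²θ − 1) log(cot(θ/2)) + (3/2)cosθ` satisfies `(Δ + 6) h = 0` away
from the poles, where `Δh = (1/sinθ) (sinθ h')'`. -/
theorem singular_mode_K_six :
    ∀ θ ∈ Set.Ioo (0 : ℝ) Real.pi,
      (1 / Real.sin θ) * deriv (fun t : ℝ => Real.sin t *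
          deriv (fun u : ℝ => -(1 / 2) * (3 * Real.cos u ^ 2 - 1) *
            Real.log (Real.cos (u / 2) / Real.sin (u / 2)) + (3 / 2) * Real.cos u) t) θ
        + 6 * (-(1 / 2) * (3 * Real.cos θ ^ 2 - 1) *
            Real.log (Real.cos (θ / 2) / Real.sin (θ / 2)) + (3 / 2) * Real.cos θ) = 0 := by
  intro θ hθ
  change axisymLaplacian _ θ + _ = 0
  rw [axisymLaplacian_eq_of_eqOn_comp_cos (y := -legendreQ₂) (F := -legendreQ₂Flux) isOpen_Ioo hθ
    (fun t ht => (sin_pos_of_pos_of_lt_pi ht.1 ht.2).ne') ?eq ?deriv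
    (hasDerivAt_legendreQ₂Flux (cos_mem_Ioo_neg_one_one hθ)).neg,
    ← artanh_cos_eq_log_cot_half hθ, legendreQ₂]
  · ring
  case eq =>
    intro u hu
    simp only [Function.comp_apply, Pi.neg_apply, legendreQ₂, artanh_cos_eq_log_cot_half hu]
    ring
  case deriv =>
    intro t ht
    simpa only [Pi.neg_apply, neg_div]
      using (hasDerivAt_legendreQ₂ (cos_mem_Ioo_neg_one_one ht)).neg
end
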